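/- For every pattern p ∈ S_m containing the pattern 321 and every n ≥ 2, there are infinitely many affine permutations in S̃_n that avoid p. In particular there are infinitely many 321-avoiding affine permutations in S̃_n. -/

import Mathlib

/-!
For `k : ℕ` let `ω_k` send `i` to `i + k (n - 1) n` when `i ≡ 1 (mod n)` and to `i - k n`
otherwise. Shifting every `i` by a multiple of `n` that depends only on `i mod n` gives a
bijection commuting with `i ↦ i + n`, and the window sum is unchanged because the multiples
`k (n - 1), -k, …, -k` add up to `0`. So `ω_k ∈ S̃_n`. It is increasing on each of the two
classes `i ≡ 1` and `i ≢ 1`, so a decreasing triple would need three classes: `ω_k` avoids `321`,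
hence every pattern containing `321`. The values `ω_k 1 = 1 + k (n - 1) n` are distinct.
-/

/-- `ω` contains the pattern `p`: some increasing sequence of indices has values in
the same relative order as `p`. -/
def ContainsPattern {m : ℕ} (ω : ℤ → ℤ) (p : Equiv.Perm (Fin m)) : Prop :=
  ∃ f : Fin m → ℤ, StrictMono f ∧ ∀ a b : Fin m, p a < p b ↔ ω (f a) < ω (f b)

open Finset Function

theorem ContainsPattern.exists_decreasing_triple {m : ℕ} {ω : ℤ → ℤ} {p : Equiv.Perm (Fin m)}
    (hω : ContainsPattern ω p) (hp : ∃ i j k : Fin m, i < j ∧ j < k ∧ p k < p j ∧ p j < p i) :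
    ∃ i₁ i₂ i₃ : ℤ, i₁ < i₂ ∧ i₂ < i₃ ∧ ω i₃ < ω i₂ ∧ ω i₂ < ω i₁ := by
  obtain ⟨f, hf, hrel⟩ := hω
  obtain ⟨i, j, k, hij, hjk, hkj, hji⟩ := hp
  exact ⟨f i, f j, f k, hf hij, hf hjk, (hrel k j).mp hkj, (hrel j i).mp hji⟩

/-- By pigeonhole, two entries of a decreasing triple would lie in the same class. -/
theorem not_exists_decreasing_triple_of_strictMonoOn {α β : Type*} [LinearOrder α] [Preorder β]
    {ω : α → β} (P : α → Prop) (hP : StrictMonoOn ω {i | P i})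
    (hnP : StrictMonoOn ω {i | ¬ P i}) :
    ¬ ∃ i₁ i₂ i₃ : α, i₁ < i₂ ∧ i₂ < i₃ ∧ ω i₃ < ω i₂ ∧ ω i₂ < ω i₁ := by
  have mono {a b : α} (hab : a < b) (hPab : P a ↔ P b) : ω a < ω b := by
    by_cases ha : P a
    · exact hP ha (hPab.mp ha) hab
    · exact hnP ha (mt hPab.mpr ha) hab
  rintro ⟨i₁, i₂, i₃, h₁₂, h₂₃, hω₃₂, hω₂₁⟩
  by_cases h₁ : P i₁ ↔ P i₂
  · exact (mono h₁₂ h₁).asymm hω₂₁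
  by_cases h₂ : P i₂ ↔ P i₃
  · exact (mono h₂₃ h₂).asymm hω₃₂
  · exact (mono (h₁₂.trans h₂₃) (by tauto)).asymm (hω₃₂.trans hω₂₁)

theorem sum_Icc_one_id (n : ℕ) : ∑ i ∈ Icc (1 : ℤ) n, i = ((n + 1).choose 2 : ℤ) := by
  induction n with
  | zero => simp
  | succ n ih =>
    rw [Nat.cast_succ, ← insert_Icc_right_eq_Icc_add_one (by omega),
      sum_insert (by simp), ih, Nat.choose_succ_succ' (n + 1), Nat.choose_one_right]
    push_cast
    ring

/-- Membership in the affine symmetric group `S̃_n`. -/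
def IsAffinePerm (n : ℕ) (ω : ℤ → ℤ) : Prop :=
  Bijective ω ∧ (∀ i : ℤ, ω (i + n) = ω i + n) ∧
    ∑ i ∈ Icc (1 : ℤ) n, ω i = ((n + 1).choose 2 : ℤ)

section PeriodicShift

variable {n : ℕ} {t : ℤ → ℤ}

def periodicShift (n : ℕ) (t : ℤ → ℤ) (i : ℤ) : ℤ := i + t i * n

theorem periodicShift_lt_periodicShift {a b : ℤ} (hab : a < b) (ht : t a = t b) :
    periodicShift n t a < periodicShift n t b := by
  simp only [periodicShift, ht]
  omega

theorem bijective_periodicShift (ht : Periodic t n) : Bijective (periodicShift n t) := by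
  refine bijective_iff_has_inverse.mpr ⟨fun j => j - t j * n, fun i => ?_, fun j => ?_⟩
  · have : t (i + t i * n) = t i := by simpa using ht.int_mul (t i) i
    simp [periodicShift, this]
  · have : t (j - t j * n) = t j := by simpa using ht.sub_int_mul_eq (x := j) (t j)
    simp [periodicShift, this]

theorem isAffinePerm_periodicShift (ht : Periodic t n) (hsum : ∑ i ∈ Icc (1 : ℤ) n, t i = 0) :
    IsAffinePerm n (periodicShift n t) := by
  refine ⟨bijective_periodicShift ht, fun i => ?_, ?_⟩
  · simp only [periodicShift, ht i]
    ring
  · simp only [periodicShift, sum_add_distrib, ← sum_mul, hsum, zero_mul, add_zero]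
    exact sum_Icc_one_id n

end PeriodicShift

def residueOneOffset (n : ℕ) (i : ℤ) : ℤ := if i % n = 1 then (n : ℤ) - 1 else -1

theorem periodic_residueOneOffset (n : ℕ) : Periodic (residueOneOffset n) n := fun i => by
  simp only [residueOneOffset, Int.add_emod_right]

theorem sum_Icc_residueOneOffset {n : ℕ} (hn : 2 ≤ n) :
    ∑ i ∈ Icc (1 : ℤ) n, residueOneOffset n i = 0 := by
  have hwindow : Icc (1 : ℤ) n = insert 1 (Icc 2 (n : ℤ)) := by
    rw [← insert_Icc_add_one_left_eq_Icc (a := (1 : ℤ)) (b := n) (by omega)]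
    rfl
  have hrest : ∀ i ∈ Icc (2 : ℤ) n, residueOneOffset n i = -1 := fun i hi => by
    rw [mem_Icc] at hi
    have : i % n ≠ 1 := by
      rcases hi.2.eq_or_lt with rfl | hlt
      · simp
      · rw [Int.emod_eq_of_lt (by omega) hlt]
        omega
    simp [residueOneOffset, this]
  rw [hwindow, sum_insert (by simp), sum_congr rfl hrest, sum_const, Int.card_Icc,
    residueOneOffset, if_pos (Int.emod_eq_of_lt (by omega) (by omega))]
  simp only [nsmul_eq_mul, mul_neg, mul_one]
  omega

def twoClassPerm (n k : ℕ) : ℤ → ℤ := periodicShift n (fun i => k * residueOneOffset n i)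

theorem isAffinePerm_twoClassPerm {n : ℕ} (hn : 2 ≤ n) (k : ℕ) :
    IsAffinePerm n (twoClassPerm n k) :=
  isAffinePerm_periodicShift (fun i => by simp only [periodic_residueOneOffset n i])
    (by rw [← mul_sum, sum_Icc_residueOneOffset hn, mul_zero])

theorem twoClassPerm_not_exists_decreasing_triple (n k : ℕ) :
    ¬ ∃ i₁ i₂ i₃ : ℤ, i₁ < i₂ ∧ i₂ < i₃ ∧
      twoClassPerm n k i₃ < twoClassPerm n k i₂ ∧ twoClassPerm n k i₂ < twoClassPerm n k i₁ := by
  refine not_exists_decreasing_triple_of_strictMonoOn (fun i => i % n = 1) ?_ ?_ <;>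
  · intro a ha b hb hab
    refine periodicShift_lt_periodicShift hab ?_
    simp_all [residueOneOffset]

theorem injective_twoClassPerm {n : ℕ} (hn : 2 ≤ n) : Injective (twoClassPerm n) := by
  intro k l hkl
  have h1 : (1 : ℤ) % n = 1 := Int.emod_eq_of_lt (by omega) (by omega)
  have hpos : 0 < ((n : ℤ) - 1) * n := by nlinarith
  have := congrFun hkl 1
  simp only [twoClassPerm, periodicShift, residueOneOffset, h1, if_true] at this
  have hscaled : (k : ℤ) * ((n - 1) * n) = l * ((n - 1) * n) := by linear_combination this
  exact_mod_cast mul_right_cancel₀ hpos.ne' hscaled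

theorem contains_321_infinitely_many_avoiders (n m : ℕ) (hn : 2 ≤ n)
    (p : Equiv.Perm (Fin m))
    (h321 : ∃ i j k : Fin m, i < j ∧ j < k ∧ p k < p j ∧ p j < p i) :
    {ω : ℤ → ℤ | Function.Bijective ω ∧
      (∀ i : ℤ, ω (i + n) = ω i + n) ∧
      (∑ i ∈ Finset.Icc (1 : ℤ) (n : ℤ), ω i = ((n + 1).choose 2 : ℤ)) ∧
      ¬ ContainsPattern ω p}.Infinite ∧
    {ω : ℤ → ℤ | Function.Bijective ω ∧
      (∀ i : ℤ, ω (i + n) = ω i + n) ∧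
      (∑ i ∈ Finset.Icc (1 : ℤ) (n : ℤ), ω i = ((n + 1).choose 2 : ℤ)) ∧
      ¬ ∃ i₁ i₂ i₃ : ℤ, i₁ < i₂ ∧ i₂ < i₃ ∧ ω i₃ < ω i₂ ∧ ω i₂ < ω i₁}.Infinite := by
  have avoiders321 : {ω : ℤ → ℤ | Function.Bijective ω ∧
      (∀ i : ℤ, ω (i + n) = ω i + n) ∧
      (∑ i ∈ Finset.Icc (1 : ℤ) (n : ℤ), ω i = ((n + 1).choose 2 : ℤ)) ∧
      ¬ ∃ i₁ i₂ i₃ : ℤ, i₁ < i₂ ∧ i₂ < i₃ ∧ ω i₃ < ω i₂ ∧ ω i₂ < ω i₁}.Infinite := by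
    refine Set.infinite_of_injective_forall_mem (injective_twoClassPerm hn) fun k => ?_
    obtain ⟨hbij, hper, hsum⟩ := isAffinePerm_twoClassPerm hn k
    exact ⟨hbij, hper, hsum, twoClassPerm_not_exists_decreasing_triple n k⟩
  refine ⟨avoiders321.mono ?_, avoiders321⟩
  rintro ω ⟨hbij, hper, hsum, hno321⟩
  exact ⟨hbij, hper, hsum, fun hp => hno321 (hp.exists_decreasing_triple h321)⟩
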